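/- arXiv:2107.03092 — 2 statements merged into one kernel-verified Lean document; each statement's English description precedes it below -/
import Mathlib

section
/- Let G be a finite directed graph and let T^s and T^g be two directed spanning trees of G. Then there exists a reconfiguration sequence ⟨T^s = T_0, T_1, …, T_ℓ = T^g⟩ in which every T_i is a directed spanning tree of G, |A(T_i) \ A(T_{i+1})| = |A(T_{i+1}) \ A(T_i)| = 1 for all 0 ≤ i < ℓ, and the length ℓ equals |A(T^s) \ A(T^g)| (which is the minimum possible length). -/
/-- The vertex set of a set of arcs. -/
def arcVerts {V : Type*} [DecidableEq V] (T : Finset (V × V)) : Finset V :=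
  T.image Prod.fst ∪ T.image Prod.snd

/-- The in-degree of a vertex `v` in a set of arcs `T`. -/
def inDeg {V : Type*} [DecidableEq V] (T : Finset (V × V)) (v : V) : ℕ :=
  (T.filter fun e => e.2 = v).card

/-- The step relation of a set of arcs: `arcRel T a b` iff `(a, b)` is an arc of `T`. -/
def arcRel {V : Type*} (T : Finset (V × V)) : V → V → Prop := fun a b => (a, b) ∈ T

/-- `T` is (the arc set of) a directed tree rooted at `r`: the root has in-degree `0`,
every other vertex has in-degree exactly `1`, and every vertex is reachable from `r`. -/
def IsDirTree {V : Type*} [DecidableEq V] (T : Finset (V × V)) (r : V) : Prop :=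
  inDeg T r = 0 ∧ (∀ v ∈ arcVerts T, v ≠ r → inDeg T v = 1) ∧
    ∀ v ∈ arcVerts T, Relation.ReflTransGen (arcRel T) r v

/-- `T` is a directed spanning tree of the digraph on vertex type `V` with arc set `A`. -/
def IsDirSpanningTree {V : Type*} [DecidableEq V] (A T : Finset (V × V)) : Prop :=
  T ⊆ A ∧ ∃ r, IsDirTree T r ∧ ∀ v, v ≠ r → v ∈ arcVerts T

/-!
A directed spanning tree `T ≠ T^g` can always be moved one step towards `T^g` by exchanging an
arc `f ∈ T \ T^g` for an arc `e ∈ T^g \ T`. If `T` and `T^g` have the same root `r`, follow a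
`T^g`-path from `r` to its first arc `(u, v) ∉ T` and let it replace the `T`-arc entering `v`: the
path to `u` survives, so every vertex stays reachable from `r`. If the roots differ, the `T^g`-arc
`(u, r)` entering the root `r` of `T` closes a cycle with the `T`-path from `r` to `u`; since
`T^g` is acyclic, that path has a last arc `(a, b) ∉ T^g`, and exchanging it for `(u, r)` yields a
tree rooted at `b`. Each exchange lowers `|T \ T^g|` by one.
-/

section Reconfiguration

variable {α : Type*} [DecidableEq α]

lemma sdiff_insert_erase_of_notMem {T : Finset α} {e f : α} (he : e ∉ T) (hf : f ∈ T) :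
    T \ insert e (T.erase f) = {f} := by
  rw [Finset.sdiff_insert, Finset.sdiff_erase_self hf,
    Finset.erase_eq_of_notMem (by simpa [eq_comm] using ne_of_mem_of_not_mem hf he)]

lemma insert_erase_sdiff_of_notMem {T : Finset α} {e f : α} (he : e ∉ T) :
    insert e (T.erase f) \ T = {e} := by
  rw [Finset.insert_sdiff_of_notMem _ he, Finset.sdiff_eq_empty_iff_subset.mpr
    (Finset.erase_subset f T)]
  rfl

lemma exists_reconfiguration_of_exchange (P : Finset α → Prop) (Tg : Finset α)
    (hex : ∀ T, P T → T ≠ Tg → ∃ e ∈ Tg \ T, ∃ f ∈ T \ Tg, P (insert e (T.erase f)))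
    {T : Finset α} (hT : P T) :
    ∃ s : ℕ → Finset α, s 0 = T ∧ s (T \ Tg).card = Tg ∧
      (∀ i ≤ (T \ Tg).card, P (s i)) ∧
      ∀ i < (T \ Tg).card, (s i \ s (i + 1)).card = 1 ∧ (s (i + 1) \ s i).card = 1 := by
  induction hn : (T \ Tg).card generalizing T with
  | zero =>
    have hTg : T = Tg := by
      by_contra hne
      obtain ⟨-, -, f, hf, -⟩ := hex T hT hne
      rw [Finset.card_eq_zero.mp hn] at hf
      exact Finset.notMem_empty f hf
    exact ⟨fun _ => T, rfl, hTg, fun _ _ => hT, fun _ h => absurd h (Nat.not_lt_zero _)⟩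
  | succ n ih =>
    have hne : T ≠ Tg := by rintro rfl; simp at hn
    obtain ⟨e, he, f, hf, hT₁⟩ := hex T hT hne
    have hn₁ : (insert e (T.erase f) \ Tg).card = n := by
      rw [Finset.insert_sdiff_of_mem _ (Finset.mem_sdiff.mp he).1, Finset.erase_sdiff_comm,
        Finset.card_erase_of_mem hf, hn, Nat.add_sub_cancel]
    obtain ⟨s, hs0, hsn, hsP, hsd⟩ := ih hT₁ hn₁
    refine ⟨fun | 0 => T | i + 1 => s i, rfl, hsn, ?_, ?_⟩
    · rintro (_ | i) hi
      exacts [hT, hsP i (by omega)]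
    · rintro (_ | i) hi
      · simp only [hs0, sdiff_insert_erase_of_notMem (Finset.mem_sdiff.mp he).2
          (Finset.mem_sdiff.mp hf).1, insert_erase_sdiff_of_notMem (Finset.mem_sdiff.mp he).2,
          Finset.card_singleton, and_self]
      · exact hsd i (by omega)

end Reconfiguration

section Arcs

variable {V : Type*}

lemma reflTransGen_arcRel_mono {T T₁ : Finset (V × V)} (h : T ⊆ T₁) :
    Relation.ReflTransGen (arcRel T) ≤ Relation.ReflTransGen (arcRel T₁) :=
  Relation.ReflTransGen.mono fun _ _ hxy => h hxy

variable [DecidableEq V]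

lemma reflTransGen_inter_or_exists_first_sdiff {T S : Finset (V × V)} {a x : V}
    (h : Relation.ReflTransGen (arcRel T) a x) :
    Relation.ReflTransGen (arcRel (T ∩ S)) a x ∨
      ∃ g ∈ T \ S, Relation.ReflTransGen (arcRel (T ∩ S)) a g.1 := by
  induction h with
  | refl => exact Or.inl .refl
  | @tail w x _ hwx ih =>
    rcases ih with hp | hg
    · by_cases hS : (w, x) ∈ S
      · exact Or.inl (hp.tail (Finset.mem_inter.mpr ⟨hwx, hS⟩))
      · exact Or.inr ⟨(w, x), Finset.mem_sdiff.mpr ⟨hwx, hS⟩, hp⟩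
    · exact Or.inr hg

lemma reflTransGen_inter_or_exists_last_sdiff {T S : Finset (V × V)} {a x : V}
    (h : Relation.ReflTransGen (arcRel T) a x) :
    Relation.ReflTransGen (arcRel (T ∩ S)) a x ∨
      ∃ g ∈ T \ S, Relation.ReflTransGen (arcRel (T ∩ S)) g.2 x := by
  induction h with
  | refl => exact Or.inl .refl
  | @tail w x _ hwx ih =>
    by_cases hS : (w, x) ∈ S
    · have hwx' : arcRel (T ∩ S) w x := Finset.mem_inter.mpr ⟨hwx, hS⟩
      rcases ih with hp | ⟨g, hg, hp⟩
      · exact Or.inl (hp.tail hwx')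
      · exact Or.inr ⟨g, hg, hp.tail hwx'⟩
    · exact Or.inr ⟨(w, x), Finset.mem_sdiff.mpr ⟨hwx, hS⟩, .refl⟩

lemma inter_subset_erase {T S : Finset (V × V)} {f : V × V} (hf : f ∉ S) :
    T ∩ S ⊆ T.erase f := fun _ hx =>
  Finset.mem_erase.mpr ⟨ne_of_mem_of_not_mem (Finset.mem_inter.mp hx).2 hf,
    (Finset.mem_inter.mp hx).1⟩

lemma inDeg_insert {T : Finset (V × V)} {e : V × V} (he : e ∉ T) (v : V) :
    inDeg (insert e T) v = inDeg T v + if e.2 = v then 1 else 0 := by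
  unfold inDeg
  rw [Finset.filter_insert]
  split_ifs
  · exact Finset.card_insert_of_notMem fun h => he (Finset.mem_of_mem_filter e h)
  · rfl

lemma inDeg_erase_add {T : Finset (V × V)} {f : V × V} (hf : f ∈ T) (v : V) :
    inDeg (T.erase f) v + (if f.2 = v then 1 else 0) = inDeg T v := by
  unfold inDeg
  rw [Finset.filter_erase]
  split_ifs with h
  · exact Finset.card_erase_add_one (Finset.mem_filter.mpr ⟨hf, h⟩)
  · rw [add_zero, Finset.erase_eq_of_notMem]
    exact fun hm => h (Finset.mem_filter.mp hm).2

lemma inDeg_insert_erase_add {T : Finset (V × V)} {e f : V × V} (he : e ∉ T) (hf : f ∈ T)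
    (v : V) : inDeg (insert e (T.erase f)) v + (if f.2 = v then 1 else 0) =
      inDeg T v + if e.2 = v then 1 else 0 := by
  rw [inDeg_insert (fun h => he (Finset.mem_of_mem_erase h)), ← inDeg_erase_add hf v]
  ring

end Arcs

structure IsArborescence {V : Type*} [DecidableEq V] (T : Finset (V × V)) (r : V) : Prop where
  inDeg_eq : ∀ v, inDeg T v = if v = r then 0 else 1
  reachable : ∀ v, Relation.ReflTransGen (arcRel T) r v

namespace IsArborescence

variable {V : Type*} [DecidableEq V] {T T' : Finset (V × V)} {r r' : V}

lemma notMem_root (ht : IsArborescence T r) (a : V) : (a, r) ∉ T := fun h => by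
  have h0 : inDeg T r = 0 := by simpa using ht.inDeg_eq r
  exact Finset.filter_eq_empty_iff.mp (Finset.card_eq_zero.mp h0) h rfl

lemma eq_of_mem (ht : IsArborescence T r) {a b v : V} (ha : (a, v) ∈ T) (hb : (b, v) ∈ T) :
    a = b := by
  have h1 : inDeg T v ≤ 1 := by rw [ht.inDeg_eq]; split_ifs <;> omega
  exact congrArg Prod.fst (Finset.card_le_one.mp h1 _ (Finset.mem_filter.mpr ⟨ha, rfl⟩) _
    (Finset.mem_filter.mpr ⟨hb, rfl⟩))

lemma exists_mem (ht : IsArborescence T r) {v : V} (hv : v ≠ r) : ∃ a, (a, v) ∈ T := by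
  have h1 : inDeg T v = 1 := by rw [ht.inDeg_eq, if_neg hv]
  obtain ⟨⟨a, w⟩, h⟩ := Finset.card_pos.mp (h1.symm ▸ Nat.one_pos : 0 < inDeg T v)
  obtain ⟨haT, rfl⟩ := Finset.mem_filter.mp h
  exact ⟨a, haT⟩

lemma not_transGen_self (ht : IsArborescence T r) (x : V) :
    ¬ Relation.TransGen (arcRel T) x x := by
  induction ht.reachable x with
  | refl =>
    intro hc
    obtain ⟨c, -, hcr⟩ := Relation.TransGen.tail'_iff.mp hc
    exact ht.notMem_root c hcr
  | @tail w x _ hwx ih =>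
    intro hc
    obtain ⟨c, hxc, hcx⟩ := Relation.TransGen.tail'_iff.mp hc
    obtain rfl := ht.eq_of_mem hcx hwx
    exact ih (Relation.TransGen.head' hwx hxc)

lemma eq_of_subset (ht : IsArborescence T r) (ht' : IsArborescence T' r') (h : T' ⊆ T) :
    T' = T := by
  obtain rfl : r' = r := by
    by_contra hne
    obtain ⟨u, hu⟩ := ht'.exists_mem (Ne.symm hne)
    exact ht.notMem_root u (h hu)
  refine Finset.Subset.antisymm h fun ⟨a, v⟩ hav => ?_
  obtain ⟨b, hb⟩ := ht'.exists_mem fun hv : v = r' => ht.notMem_root a (hv ▸ hav)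
  rwa [ht.eq_of_mem hav (h hb)]

lemma reachable_of_erase_subset (ht : IsArborescence T r) {T₁ : Finset (V × V)} {f : V × V}
    {s : V} (hsub : T.erase f ⊆ T₁) (hr : Relation.ReflTransGen (arcRel T₁) s r)
    (hf : Relation.ReflTransGen (arcRel T₁) s f.2) (x : V) :
    Relation.ReflTransGen (arcRel T₁) s x := by
  induction ht.reachable x with
  | refl => exact hr
  | @tail w x _ hwx ih =>
    by_cases hfwx : (w, x) = f
    · subst hfwx
      exact hf
    · exact ih.tail (hsub (Finset.mem_erase.mpr ⟨hfwx, hwx⟩))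

lemma exists_exchange_of_root_eq (ht : IsArborescence T r) (ht' : IsArborescence T' r)
    (hne : T ≠ T') : ∃ e ∈ T' \ T, ∃ f ∈ T \ T', IsArborescence (insert e (T.erase f)) r := by
  obtain ⟨e₀, he₀⟩ : (T' \ T).Nonempty :=
    Finset.sdiff_nonempty.mpr fun h => hne (ht.eq_of_subset ht' h).symm
  obtain ⟨⟨u, v⟩, he, hu⟩ : ∃ e ∈ T' \ T, Relation.ReflTransGen (arcRel (T' ∩ T)) r e.1 :=
    (reflTransGen_inter_or_exists_first_sdiff (ht'.reachable e₀.1)).elim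
      (fun h => ⟨e₀, he₀, h⟩) id
  obtain ⟨heT', heT⟩ := Finset.mem_sdiff.mp he
  obtain ⟨w, hw⟩ := ht.exists_mem fun hv : v = r => ht'.notMem_root u (hv ▸ heT')
  have hwT' : (w, v) ∉ T' := fun h => heT (ht'.eq_of_mem heT' h ▸ hw)
  have hu₁ : Relation.ReflTransGen (arcRel (insert (u, v) (T.erase (w, v)))) r u :=
    reflTransGen_arcRel_mono (((Finset.inter_comm T' T).trans_subset
      (inter_subset_erase hwT')).trans (Finset.subset_insert _ _)) _ _ hu
  refine ⟨(u, v), he, (w, v), Finset.mem_sdiff.mpr ⟨hw, hwT'⟩, fun x => ?_,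
    ht.reachable_of_erase_subset (Finset.subset_insert _ _) .refl
      (hu₁.tail (Finset.mem_insert_self _ _))⟩
  exact (add_right_cancel (inDeg_insert_erase_add heT hw x)).trans (ht.inDeg_eq x)

lemma exists_exchange_of_root_ne (ht : IsArborescence T r) (ht' : IsArborescence T' r')
    (hr : r ≠ r') :
    ∃ e ∈ T' \ T, ∃ f ∈ T \ T', IsArborescence (insert e (T.erase f)) f.2 := by
  obtain ⟨u, hu⟩ := ht'.exists_mem hr
  have huT : (u, r) ∉ T := ht.notMem_root u
  obtain ⟨⟨a, b⟩, hab, hb⟩ : ∃ f ∈ T \ T', Relation.ReflTransGen (arcRel (T ∩ T')) f.2 u := by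
    refine (reflTransGen_inter_or_exists_last_sdiff (ht.reachable u)).resolve_left fun h => ?_
    exact ht'.not_transGen_self r (Relation.TransGen.tail'
      (reflTransGen_arcRel_mono Finset.inter_subset_right _ _ h) hu)
  obtain ⟨habT, habT'⟩ := Finset.mem_sdiff.mp hab
  have hbr : b ≠ r := fun h => ht.notMem_root a (h ▸ habT)
  have hbr₁ : Relation.ReflTransGen (arcRel (insert (u, r) (T.erase (a, b)))) b r :=
    (reflTransGen_arcRel_mono ((inter_subset_erase habT').trans (Finset.subset_insert _ _))
      _ _ hb).tail (Finset.mem_insert_self _ _)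
  refine ⟨(u, r), Finset.mem_sdiff.mpr ⟨hu, huT⟩, (a, b), hab, fun x => ?_,
    ht.reachable_of_erase_subset (Finset.subset_insert _ _) hbr₁ .refl⟩
  have hx := inDeg_insert_erase_add huT habT x
  rw [ht.inDeg_eq] at hx
  rcases eq_or_ne x b with rfl | hxb <;> rcases eq_or_ne x r with rfl | hxr <;>
    simp_all [eq_comm (a := x)]

end IsArborescence

lemma isDirSpanningTree_iff {V : Type*} [DecidableEq V] {A T : Finset (V × V)} :
    IsDirSpanningTree A T ↔ T ⊆ A ∧ ∃ r, IsArborescence T r := by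
  constructor
  · rintro ⟨hTA, r, ⟨h0, h1, hreach⟩, hspan⟩
    refine ⟨hTA, r, fun v => ?_, fun v => ?_⟩ <;> by_cases hv : v = r
    · simp [hv, h0]
    · simp [hv, h1 v (hspan v hv) hv]
    · exact hv ▸ .refl
    · exact hreach v (hspan v hv)
  · rintro ⟨hTA, r, ht⟩
    have hdir : IsDirTree T r :=
      ⟨by simpa using ht.inDeg_eq r, fun v _ hv => by simpa [hv] using ht.inDeg_eq v,
        fun v _ => ht.reachable v⟩
    refine ⟨hTA, r, hdir, fun v hv => ?_⟩
    obtain ⟨a, ha⟩ := ht.exists_mem hv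
    exact Finset.mem_union_right _ (Finset.mem_image_of_mem Prod.snd ha)

lemma IsDirSpanningTree.exists_exchange {V : Type*} [DecidableEq V] {A T T' : Finset (V × V)}
    (hT : IsDirSpanningTree A T) (hT' : IsDirSpanningTree A T') (hne : T ≠ T') :
    ∃ e ∈ T' \ T, ∃ f ∈ T \ T', IsDirSpanningTree A (insert e (T.erase f)) := by
  obtain ⟨hTA, r, ht⟩ := isDirSpanningTree_iff.mp hT
  obtain ⟨hTA', r', ht'⟩ := isDirSpanningTree_iff.mp hT'
  obtain ⟨e, he, f, hf, s, hs⟩ :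
      ∃ e ∈ T' \ T, ∃ f ∈ T \ T', ∃ s, IsArborescence (insert e (T.erase f)) s := by
    rcases eq_or_ne r r' with rfl | hr
    · obtain ⟨e, he, f, hf, h⟩ := ht.exists_exchange_of_root_eq ht' hne
      exact ⟨e, he, f, hf, r, h⟩
    · obtain ⟨e, he, f, hf, h⟩ := ht.exists_exchange_of_root_ne ht' hr
      exact ⟨e, he, f, hf, f.2, h⟩
  exact ⟨e, he, f, hf, isDirSpanningTree_iff.mpr ⟨Finset.insert_subset
    (hTA' (Finset.mem_sdiff.mp he).1) ((Finset.erase_subset f T).trans hTA), s, hs⟩⟩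

theorem stmt1_general {V : Type*} [DecidableEq V] (A Ts Tg : Finset (V × V))
    (hs : IsDirSpanningTree A Ts) (hg : IsDirSpanningTree A Tg) :
    ∃ f : ℕ → Finset (V × V),
      f 0 = Ts ∧ f ((Ts \ Tg).card) = Tg ∧
      (∀ i ≤ (Ts \ Tg).card, IsDirSpanningTree A (f i)) ∧
      (∀ i < (Ts \ Tg).card, (f i \ f (i + 1)).card = 1 ∧ (f (i + 1) \ f i).card = 1) :=
  exists_reconfiguration_of_exchange _ Tg (fun _ hT hne => hT.exists_exchange hg hne) hs

/-- Between any two directed spanning trees of a finite digraph there is a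
reconfiguration sequence of directed spanning trees of length exactly
`|A(T^s) \ A(T^g)|` (which is the minimum possible length). -/
theorem stmt1 {V : Type*} [Fintype V] [DecidableEq V] (A Ts Tg : Finset (V × V))
    (hs : IsDirSpanningTree A Ts) (hg : IsDirSpanningTree A Tg) :
    ∃ f : ℕ → Finset (V × V),
      f 0 = Ts ∧ f ((Ts \ Tg).card) = Tg ∧
      (∀ i ≤ (Ts \ Tg).card, IsDirSpanningTree A (f i)) ∧
      (∀ i < (Ts \ Tg).card, (f i \ f (i + 1)).card = 1 ∧ (f (i + 1) \ f i).card = 1) :=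
  stmt1_general A Ts Tg hs hg
end

section
/- Let G be a finite directed graph, r a vertex of G, and T and T' two r-directed trees in G with |A(T)| = |A(T')| = k. Call an arc e of T fixed (with respect to T') if the directed path in T from r to the head of e is contained in T', and unfixed otherwise. If h is the number of unfixed arcs of T, then there exists a reconfiguration sequence from T to T' of length at most h in which every intermediate subgraph is an r-directed tree in G with k arcs. -/
/-- An arc `e` of the `r`-directed tree `T` is fixed with respect to `T'` if the
directed path in `T` from the root to the head of `e` is contained in `T'`.
In an `r`-directed tree, the arcs of the path from `r` to the head of `e` are exactly
the arcs `f ∈ T` from whose head the head of `e` is reachable in `T`. -/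
def FixedArc {V : Type*} (T T' : Finset (V × V)) (e : V × V) : Prop :=
  ∀ f ∈ T, Relation.ReflTransGen (arcRel T) f.2 e.2 → f ∈ T'

/-- The number of arcs of `T` that are unfixed with respect to `T'`. -/
noncomputable def unfixedCount {V : Type*} (T T' : Finset (V × V)) : ℕ :=
  {e | e ∈ T ∧ ¬ FixedArc T T' e}.ncard


/-!
Induction on the number of unfixed arcs. If `T ≠ T'`, walking down `T'` from the root one meets
a first arc `(u, v) ∉ T`; the `T'`-path to `u` lies in `T`, so it is also the `T`-path to `u` and
all its arcs are fixed. Add `(u, v)` and drop either the arc of `T` entering `v` or, when `v` is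
not a vertex of `T`, a deepest unfixed arc, which ends in a leaf. The result is again an
`r`-directed tree; arcs that were fixed stay fixed because no path to them runs through `v`,
`(u, v)` becomes fixed, and the dropped arc was unfixed.
-/

open Relation Finset

section Arcs

variable {V : Type*} {s t : Finset (V × V)} {e g : V × V} {a b x : V}

lemma reflTransGen_arcRel_mono_s6 (h : s ⊆ t) (hab : ReflTransGen (arcRel s) a b) :
    ReflTransGen (arcRel t) a b :=
  ReflTransGen.mono (fun _ _ hp => h hp) _ _ hab

variable [DecidableEq V]

lemma mem_arcVerts : x ∈ arcVerts s ↔ ∃ e ∈ s, e.1 = x ∨ e.2 = x := by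
  simp only [arcVerts, mem_union, mem_image]
  aesop

lemma fst_mem_arcVerts (he : e ∈ s) : e.1 ∈ arcVerts s :=
  mem_arcVerts.2 ⟨e, he, .inl rfl⟩

lemma snd_mem_arcVerts (he : e ∈ s) : e.2 ∈ arcVerts s :=
  mem_arcVerts.2 ⟨e, he, .inr rfl⟩

lemma arcVerts_mono (h : s ⊆ t) : arcVerts s ⊆ arcVerts t := fun x hx => by
  obtain ⟨e, he, hx⟩ := mem_arcVerts.1 hx
  exact mem_arcVerts.2 ⟨e, h he, hx⟩

lemma arcVerts_insert : arcVerts (insert e s) = insert e.1 (insert e.2 (arcVerts s)) := by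
  ext x
  simp only [mem_insert, mem_arcVerts, exists_eq_or_imp]
  grind

lemma inDeg_insert_of_ne (h : e.2 ≠ x) : inDeg (insert e s) x = inDeg s x := by
  rw [inDeg, filter_insert, if_neg h, inDeg]

lemma inDeg_erase_of_ne (h : e.2 ≠ x) : inDeg (s.erase e) x = inDeg s x := by
  unfold inDeg
  rw [filter_erase]
  exact congrArg card (erase_eq_of_notMem fun he => h (mem_filter.1 he).2)

lemma mem_arcVerts_of_reflTransGen (hab : ReflTransGen (arcRel s) a b)
    (hb : b ∈ arcVerts s) : a ∈ arcVerts s := by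
  rcases hab.cases_head with rfl | ⟨c, hac, -⟩
  exacts [hb, fst_mem_arcVerts hac]

lemma mem_arcVerts_of_reflTransGen_of_ne (hab : ReflTransGen (arcRel s) a b) (hba : b ≠ a) :
    b ∈ arcVerts s := by
  rcases hab.cases_tail with h | ⟨c, -, hc⟩
  exacts [absurd h hba, snd_mem_arcVerts hc]

/-- A walk that uses the arc `g` passes through `g.2` afterwards. -/
lemma reflTransGen_erase_or (g : V × V) (hab : ReflTransGen (arcRel s) a b) :
    ReflTransGen (arcRel (s.erase g)) a b ∨ ReflTransGen (arcRel (s.erase g)) g.2 b := by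
  induction hab with
  | refl => exact .inl .refl
  | @tail c d _ hcd ih =>
    by_cases hg : (c, d) = g
    · exact .inr (hg ▸ .refl)
    · have hcd' : arcRel (s.erase g) c d := mem_erase.2 ⟨hg, hcd⟩
      exact ih.imp (·.tail hcd') (·.tail hcd')

lemma reflTransGen_of_reflTransGen_insert (hab : ReflTransGen (arcRel (insert e s)) a b)
    (hb : ¬ ReflTransGen (arcRel s) e.2 b) : ReflTransGen (arcRel s) a b := by
  induction hab using ReflTransGen.head_induction_on with
  | refl => exact .refl
  | @head a c hac _ ih =>
    rcases mem_insert.1 hac with rfl | hac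
    · exact absurd ih hb
    · exact ih.head hac

lemma sdiff_insert_erase (hg : g ∈ s) (he : e ∉ s) : s \ insert e (s.erase g) = {g} := by
  ext f
  simp only [mem_sdiff, mem_insert, mem_erase, mem_singleton]
  constructor
  · tauto
  · rintro rfl
    exact ⟨hg, by rintro (rfl | ⟨h, -⟩) <;> tauto⟩

lemma insert_erase_sdiff (he : e ∉ s) : insert e (s.erase g) \ s = {e} := by
  ext f
  simp only [mem_sdiff, mem_insert, mem_erase, mem_singleton]
  constructor
  · tauto
  · rintro rfl
    exact ⟨.inl rfl, he⟩

end Arcs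

/-- The path from the root to `x` in the tree `T` lies in `T'`; thus `FixedArc T T' e` is
`RootPathIn T T' e.2`. -/
def RootPathIn {V : Type*} (T T' : Finset (V × V)) (x : V) : Prop :=
  ∀ f ∈ T, ReflTransGen (arcRel T) f.2 x → f ∈ T'

section Trees

variable {V : Type*} {T T' : Finset (V × V)} {r a b u v x : V} {e g : V × V}

lemma FixedArc.mem (h : FixedArc T T' e) (he : e ∈ T) : e ∈ T' := h e he .refl

lemma RootPathIn.of_reflTransGen (h : RootPathIn T T' b) (hab : ReflTransGen (arcRel T) a b) :
    RootPathIn T T' a :=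
  fun f hf hfa => h f hf (hfa.trans hab)

lemma RootPathIn.reflTransGen (h : RootPathIn T' T b) (hab : ReflTransGen (arcRel T') a b) :
    ReflTransGen (arcRel T) a b := by
  induction hab with
  | refl => exact .refl
  | @tail c d _ hcd ih => exact (ih (h.of_reflTransGen (.single hcd))).tail (h _ hcd .refl)

variable [DecidableEq V]

lemma RootPathIn.insert {S : Finset (V × V)} {t : V} (he : e ∈ T') (hS : S ⊆ T)
    (het : ¬ ReflTransGen (arcRel T) e.2 t) (ht : RootPathIn T T' t) :
    RootPathIn (insert e S) T' t := fun f hf hft => by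
  rcases mem_insert.1 hf with rfl | hf
  · exact he
  · refine ht f (hS hf) (reflTransGen_arcRel_mono_s6 hS ?_)
    exact reflTransGen_of_reflTransGen_insert hft fun h => het (reflTransGen_arcRel_mono_s6 hS h)

lemma not_reflTransGen_of_rootPathIn {t : V} (hg : g ∈ T) (hvr : v ≠ r)
    (hv : g.2 = v ∧ g ∉ T' ∨ v ∉ arcVerts T) (ht : ReflTransGen (arcRel T) r t)
    (hfix : RootPathIn T T' t) : ¬ ReflTransGen (arcRel T) v t := fun hvt => by
  rcases hv with ⟨rfl, hgT'⟩ | hvT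
  · exact hgT' (hfix g hg hvt)
  · rcases hvt.cases_head with rfl | ⟨c, hvc, -⟩
    exacts [hvT (mem_arcVerts_of_reflTransGen_of_ne ht hvr), hvT (fst_mem_arcVerts hvc)]

namespace IsDirTree

variable (hT : IsDirTree T r)
include hT

lemma reach (hx : x ∈ arcVerts T) : ReflTransGen (arcRel T) r x := hT.2.2 x hx

lemma snd_ne_root (he : e ∈ T) : e.2 ≠ r := fun h => by
  have : e ∈ T.filter (·.2 = r) := mem_filter.2 ⟨he, h⟩
  rw [card_eq_zero.1 hT.1] at this
  exact notMem_empty e this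

lemma eq_of_snd_eq {f : V × V} (he : e ∈ T) (hf : f ∈ T) (h : e.2 = f.2) : e = f :=
  card_le_one.1 (hT.2.1 _ (snd_mem_arcVerts he) (hT.snd_ne_root he)).le e
    (mem_filter.2 ⟨he, rfl⟩) f (mem_filter.2 ⟨hf, h.symm⟩)

lemma not_reflTransGen_root (he : e ∈ T) : ¬ ReflTransGen (arcRel T) e.2 r := fun h => by
  rcases h.cases_tail with h | ⟨c, -, hc⟩
  exacts [hT.snd_ne_root he h.symm, hT.snd_ne_root hc rfl]

lemma not_reflTransGen_of_mem (hab : (a, b) ∈ T) : ¬ ReflTransGen (arcRel T) b a := by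
  have hra : ReflTransGen (arcRel T) r a := hT.reach (fst_mem_arcVerts hab)
  induction hra generalizing b with
  | refl => exact hT.not_reflTransGen_root hab
  | @tail y a _ hya ih =>
    intro hba
    -- the arc entering `a` on the cycle `a → b ⟶* a` is `(y, a)`, so the cycle passes `y`
    refine ih hya ?_
    rcases hba.cases_tail with rfl | ⟨z, hbz, hza⟩
    · obtain rfl : y = a := (Prod.ext_iff.1 (hT.eq_of_snd_eq hya hab rfl)).1
      exact .refl
    · obtain rfl : z = y := (Prod.ext_iff.1 (hT.eq_of_snd_eq hza hya rfl)).1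
      exact hbz.head hab

lemma rootPathIn_root : RootPathIn T T' r := fun _ hf h => absurd h (hT.not_reflTransGen_root hf)

lemma rootPathIn_tail (hab : (a, b) ∈ T) (hab' : (a, b) ∈ T') (ha : RootPathIn T T' a) :
    RootPathIn T T' b := fun f hf hfb => by
  rcases hfb.cases_tail with h | ⟨c, hfc, hcb⟩
  · exact hT.eq_of_snd_eq hf hab h.symm ▸ hab'
  · obtain rfl : c = a := (Prod.ext_iff.1 (hT.eq_of_snd_eq hcb hab rfl)).1
    exact ha f hf hfc

/-- If the `T'`-path to `x` lies in the tree `T`, it is also the `T`-path to `x`. -/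
lemma rootPathIn_of_rootPathIn (hx : ReflTransGen (arcRel T') r x) (h : RootPathIn T' T x) :
    RootPathIn T T' x := by
  induction hx with
  | refl => exact hT.rootPathIn_root
  | @tail y x _ hyx ih =>
    exact hT.rootPathIn_tail (h _ hyx .refl) hyx (ih (h.of_reflTransGen (.single hyx)))

lemma rootPathIn_or_exists_arc (hx : ReflTransGen (arcRel T) r x) :
    RootPathIn T T' x ∨ ∃ u v, (u, v) ∈ T ∧ (u, v) ∉ T' ∧ ReflTransGen (arcRel T) r u ∧
      RootPathIn T T' u := by
  induction hx with
  | refl => exact .inl hT.rootPathIn_root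
  | @tail y x hry hyx ih =>
    refine ih.elim (fun hy => ?_) .inr
    by_cases hyx' : (y, x) ∈ T'
    · exact .inl (hT.rootPathIn_tail hyx hyx' hy)
    · exact .inr ⟨y, x, hyx, hyx', hry, hy⟩

lemma exists_leaf_not_fixedArc (he : e ∈ T) (hfix : ¬ FixedArc T T' e) :
    ∃ g ∈ T, ¬ FixedArc T T' g ∧ ∀ c, (g.2, c) ∉ T := by
  classical
  -- a deepest unfixed arc; the depth of a vertex is its number of ancestor arcs
  let ancestors (x : V) := T.filter fun f => ReflTransGen (arcRel T) f.2 x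
  obtain ⟨g, hg, hmax⟩ := (T.filter fun f => ¬ FixedArc T T' f).exists_max_image
    (fun f => #(ancestors f.2)) ⟨e, mem_filter.2 ⟨he, hfix⟩⟩
  obtain ⟨hgT, hgfix⟩ := mem_filter.1 hg
  refine ⟨g, hgT, hgfix, fun c hc => ?_⟩
  have hcfix : ¬ FixedArc T T' (g.2, c) := fun h =>
    hgfix (RootPathIn.of_reflTransGen h (.single hc))
  have hsub : ancestors g.2 ⊆ ancestors c := fun f hf => by
    obtain ⟨hfT, hfg⟩ := mem_filter.1 hf
    exact mem_filter.2 ⟨hfT, hfg.tail hc⟩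
  have hlt : ancestors g.2 ⊂ ancestors c := (ssubset_iff_of_subset hsub).2
    ⟨(g.2, c), mem_filter.2 ⟨hc, .refl⟩,
      fun h => hT.not_reflTransGen_of_mem hc (mem_filter.1 h).2⟩
  exact (hmax _ (mem_filter.2 ⟨hc, hcfix⟩)).not_gt (card_lt_card hlt)

lemma snd_notMem_arcVerts_erase (hg : g ∈ T) (hleaf : ∀ c, (g.2, c) ∉ T) :
    g.2 ∉ arcVerts (T.erase g) := fun h => by
  obtain ⟨f, hf, h | h⟩ := mem_arcVerts.1 h
  · exact hleaf f.2 (h ▸ mem_of_mem_erase hf)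
  · exact (mem_erase.1 hf).1 (hT.eq_of_snd_eq (mem_of_mem_erase hf) hg h)

/-- `hgu` keeps `u` reachable once `g` is dropped; by `hv`, `(u, v)` either replaces the arc
entering `v`, or `v` is new and `g` ends in a leaf. -/
lemma insert_erase (hg : g ∈ T) (hvr : v ≠ r) (hru : ReflTransGen (arcRel T) r u)
    (hgu : ¬ ReflTransGen (arcRel T) g.2 u)
    (hv : g.2 = v ∨ v ∉ arcVerts T ∧ ∀ c, (g.2, c) ∉ T) :
    IsDirTree (insert (u, v) (T.erase g)) r := by
  set E := T.erase g
  have hET : E ⊆ T := erase_subset g T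
  have hEv : ∀ f ∈ E, f.2 ≠ v := fun f hf hfv => by
    rcases hv with hgv | ⟨hvT, -⟩
    · exact (mem_erase.1 hf).1 (hT.eq_of_snd_eq (hET hf) hg (hfv.trans hgv.symm))
    · exact hvT (hfv ▸ snd_mem_arcVerts (hET hf))
  have hgv : g.2 = v ∨ g.2 ∉ arcVerts (insert (u, v) E) := hv.imp_right fun ⟨hvT, hleaf⟩ => by
    simp only [arcVerts_insert, mem_insert, not_or]
    exact ⟨fun h => hgu (h ▸ .refl), fun h => hvT (h ▸ snd_mem_arcVerts hg),
      hT.snd_notMem_arcVerts_erase hg hleaf⟩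
  have hruE : ReflTransGen (arcRel E) r u :=
    (reflTransGen_erase_or g hru).resolve_right fun h => hgu (reflTransGen_arcRel_mono_s6 hET h)
  have hru₁ : ReflTransGen (arcRel (insert (u, v) E)) r u :=
    reflTransGen_arcRel_mono_s6 (subset_insert _ _) hruE
  have hrv₁ : ReflTransGen (arcRel (insert (u, v) E)) r v := hru₁.tail (mem_insert_self _ _)
  refine ⟨?_, fun x hx hxr => ?_, fun x hx => ?_⟩
  · rw [inDeg_insert_of_ne hvr, inDeg_erase_of_ne (hT.snd_ne_root hg)]
    exact hT.1
  · by_cases hxv : x = v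
    · subst hxv
      rw [inDeg, filter_insert, if_pos rfl, filter_false_of_mem fun f hf => hEv f hf]
      rfl
    have hxT : x ∈ arcVerts T := by
      simp only [arcVerts_insert, mem_insert] at hx
      rcases hx with rfl | rfl | hx
      exacts [mem_arcVerts_of_reflTransGen_of_ne hru hxr, absurd rfl hxv, arcVerts_mono hET hx]
    have hgx : g.2 ≠ x := fun h => hgv.elim (fun hgv => hxv (h ▸ hgv)) fun hg₁ => hg₁ (h ▸ hx)
    rw [inDeg_insert_of_ne (Ne.symm hxv), inDeg_erase_of_ne hgx]
    exact hT.2.1 x hxT hxr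
  · simp only [arcVerts_insert, mem_insert] at hx
    rcases hx with rfl | rfl | hx
    · exact hru₁
    · exact hrv₁
    rcases reflTransGen_erase_or g (hT.reach (arcVerts_mono hET hx)) with h | h
    · exact reflTransGen_arcRel_mono_s6 (subset_insert _ _) h
    rcases hgv with hgv | hgv
    · exact hrv₁.trans (reflTransGen_arcRel_mono_s6 (subset_insert _ _) (hgv ▸ h))
    · exact absurd (arcVerts_mono (subset_insert _ _) (mem_arcVerts_of_reflTransGen h hx)) hgv

lemma exists_arc_to_drop (hT' : IsDirTree T' r) (huv' : (u, v) ∈ T') (huv : (u, v) ∉ T)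
    (hTT' : ¬ T ⊆ T') :
    ∃ g ∈ T, ¬ FixedArc T T' g ∧ (g.2 = v ∧ g ∉ T' ∨ v ∉ arcVerts T ∧ ∀ c, (g.2, c) ∉ T) := by
  by_cases hvT : v ∈ arcVerts T
  · obtain ⟨c, -, hcv⟩ := (hT.reach hvT).cases_tail.resolve_left
      (hT'.snd_ne_root huv')
    have hcv' : (c, v) ∉ T' := fun h => huv (hT'.eq_of_snd_eq h huv' rfl ▸ hcv)
    exact ⟨(c, v), hcv, fun h => hcv' (h.mem hcv), .inl ⟨rfl, hcv'⟩⟩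
  · obtain ⟨e, he, he'⟩ := not_subset.1 hTT'
    obtain ⟨g, hg, hgfix, hleaf⟩ := hT.exists_leaf_not_fixedArc he fun h => he' (h.mem he)
    exact ⟨g, hg, hgfix, .inr ⟨hvT, hleaf⟩⟩

lemma exists_swap (hT' : IsDirTree T' r) (hcard : #T = #T') (hne : T ≠ T') :
    ∃ T₁ ⊆ T ∪ T', IsDirTree T₁ r ∧ #T₁ = #T ∧ #(T \ T₁) = 1 ∧ #(T₁ \ T) = 1 ∧
      unfixedCount T₁ T' < unfixedCount T T' := by
  obtain ⟨e, he', he⟩ := not_subset.1 fun h : T' ⊆ T =>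
    hne (eq_of_subset_of_card_le h hcard.le).symm
  obtain ⟨u, v, huv', huv, hru', hu'⟩ := (hT'.rootPathIn_or_exists_arc (T' := T)
    (hT'.reach (snd_mem_arcVerts he'))).resolve_left fun h => he (h e he' .refl)
  have hu : RootPathIn T T' u := hT.rootPathIn_of_rootPathIn hru' hu'
  have hru : ReflTransGen (arcRel T) r u := hu'.reflTransGen hru'
  have hvr : v ≠ r := hT'.snd_ne_root huv'
  obtain ⟨g, hg, hgfix, hgv⟩ := hT.exists_arc_to_drop hT' huv' huv
    fun h => hne (eq_of_subset_of_card_le h hcard.ge)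
  have hgu : ¬ ReflTransGen (arcRel T) g.2 u := fun h => hgfix (hu.of_reflTransGen h)
  have hvt {t : V} : ReflTransGen (arcRel T) r t → RootPathIn T T' t →
      ¬ ReflTransGen (arcRel T) v t :=
    not_reflTransGen_of_rootPathIn hg hvr (hgv.imp_right And.left)
  set T₁ := insert (u, v) (T.erase g)
  have hT₁ : IsDirTree T₁ r := hT.insert_erase hg hvr hru hgu (hgv.imp_left And.left)
  have hfix₁ {t : V} (ht : ReflTransGen (arcRel T) r t) (hfix : RootPathIn T T' t) :
      RootPathIn T₁ T' t :=
    RootPathIn.insert huv' (erase_subset g T) (hvt ht hfix) hfix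
  have hunfixed : {f | f ∈ T₁ ∧ ¬ FixedArc T₁ T' f} ⊆ {f | f ∈ T ∧ ¬ FixedArc T T' f} \ {g} := by
    rintro f ⟨hf, hffix⟩
    rcases mem_insert.1 hf with rfl | hf
    · exact absurd (hT₁.rootPathIn_tail (mem_insert_self _ _) huv' (hfix₁ hru hu)) hffix
    obtain ⟨hfg, hfT⟩ := mem_erase.1 hf
    exact ⟨⟨hfT, fun hfix => hffix (hfix₁ (hT.reach (snd_mem_arcVerts hfT)) hfix)⟩, hfg⟩
  refine ⟨T₁, insert_subset (mem_union_right _ huv') ((erase_subset g T).trans subset_union_left),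
    hT₁, ?_, by rw [sdiff_insert_erase hg huv, card_singleton],
    by rw [insert_erase_sdiff huv, card_singleton], ?_⟩
  · rw [card_insert_of_notMem fun h => huv (mem_of_mem_erase h), card_erase_add_one hg]
  · refine Set.ncard_lt_ncard ?_ (T.finite_toSet.subset fun f hf => hf.1)
    exact hunfixed.trans_ssubset (Set.sdiff_singleton_ssubset.2 ⟨hg, hgfix⟩)

end IsDirTree

end Trees

theorem exists_exchangeSeq_of_descent {α : Type*} [DecidableEq α] (P : Finset α → Prop)
    (μ : Finset α → ℕ) (T' : Finset α)
    (hstep : ∀ S, P S → S ≠ T' → ∃ S₁, P S₁ ∧ #(S \ S₁) = 1 ∧ #(S₁ \ S) = 1 ∧ μ S₁ < μ S)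
    (S : Finset α) (hS : P S) :
    ∃ ℓ ≤ μ S, ∃ f : ℕ → Finset α, f 0 = S ∧ f ℓ = T' ∧ (∀ i ≤ ℓ, P (f i)) ∧
      ∀ i < ℓ, #(f i \ f (i + 1)) = 1 ∧ #(f (i + 1) \ f i) = 1 := by
  induction hμ : μ S using Nat.strong_induction_on generalizing S with
  | _ n ih =>
  by_cases hST : S = T'
  · exact ⟨0, Nat.zero_le _, fun _ => S, rfl, hST, fun _ _ => hS, fun _ h => by omega⟩
  obtain ⟨S₁, hS₁, hout, hin, hlt⟩ := hstep S hS hST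
  obtain ⟨ℓ, hℓ, f, rfl, hfℓ, hP, hadj⟩ := ih _ (hμ ▸ hlt) S₁ hS₁ rfl
  refine ⟨ℓ + 1, by omega, fun | 0 => S | i + 1 => f i, rfl, hfℓ, ?_, ?_⟩
  · rintro (_ | i) hi
    exacts [hS, hP i (by omega)]
  · rintro (_ | i) hi
    exacts [⟨hout, hin⟩, hadj i (by omega)]

theorem stmt6_general {V : Type*} [DecidableEq V] (A : Finset (V × V)) (r : V)
    (k : ℕ) (T T' : Finset (V × V))
    (hTA : T ⊆ A) (hT'A : T' ⊆ A) (hT : IsDirTree T r) (hT' : IsDirTree T' r)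
    (hkT : T.card = k) (hkT' : T'.card = k) :
    ∃ ℓ ≤ unfixedCount T T', ∃ f : ℕ → Finset (V × V), f 0 = T ∧ f ℓ = T' ∧
      (∀ i ≤ ℓ, f i ⊆ A ∧ IsDirTree (f i) r ∧ (f i).card = k) ∧
      (∀ i < ℓ, (f i \ f (i + 1)).card = 1 ∧ (f (i + 1) \ f i).card = 1) := by
  refine exists_exchangeSeq_of_descent (fun S => S ⊆ A ∧ IsDirTree S r ∧ #S = k)
    (unfixedCount · T') T' ?_ T ⟨hTA, hT, hkT⟩
  rintro S ⟨hSA, hS, hSk⟩ hST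
  obtain ⟨S₁, hS₁, hS₁tree, hS₁k, hout, hin, hlt⟩ :=
    hS.exists_swap hT' (hSk.trans hkT'.symm) hST
  exact ⟨S₁, ⟨hS₁.trans (union_subset hSA hT'A), hS₁tree, hS₁k.trans hSk⟩, hout, hin, hlt⟩

/-- If `T` and `T'` are `r`-directed trees with `k` arcs in a finite digraph and `h` is
the number of arcs of `T` unfixed with respect to `T'`, then there is a reconfiguration
sequence from `T` to `T'` of length at most `h` consisting of `r`-directed trees with
`k` arcs. -/
theorem stmt6 {V : Type*} [Fintype V] [DecidableEq V] (A : Finset (V × V)) (r : V)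
    (k : ℕ) (T T' : Finset (V × V))
    (hTA : T ⊆ A) (hT'A : T' ⊆ A) (hT : IsDirTree T r) (hT' : IsDirTree T' r)
    (hkT : T.card = k) (hkT' : T'.card = k) :
    ∃ ℓ ≤ unfixedCount T T', ∃ f : ℕ → Finset (V × V), f 0 = T ∧ f ℓ = T' ∧
      (∀ i ≤ ℓ, f i ⊆ A ∧ IsDirTree (f i) r ∧ (f i).card = k) ∧
      (∀ i < ℓ, (f i \ f (i + 1)).card = 1 ∧ (f (i + 1) \ f i).card = 1) :=
  stmt6_general A r k T T' hTA hT'A hT hT' hkT hkT'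
end
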